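/- Let 0 < ε ≤ 1, 0 < b ≤ π/2, and define ρ = (8bε)^{-1} on the set S* = {(cos θ, sin θ sin φ, sin θ cos φ) ∈ S² : φ ∈ [0,b]∪[π−b,π]∪[π,π+b]∪[2π−b,2π], θ ∈ [arccos ε, π − arccos ε]} and ρ = 0 elsewhere on S². Then ∫_{S²} ρ dS = 1, ∫_{S²} x² ρ dS = ε²/3, ∫_{S²} y² ρ dS = (1/2 − sin(2b)/(4b))(1 − ε²/3), ∫_{S²} z² ρ dS = (1/2 + sin(2b)/(4b))(1 − ε²/3), and all mixed second moments ∫ xy ρ dS, ∫ yz ρ dS, ∫ zx ρ dS vanish. -/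

import Mathlib

open Real

/-- The domain `S*` in the `(θ, φ)` parameter space, where the sphere is
parametrized as `(x, y, z) = (cos θ, sin θ * sin φ, sin θ * cos φ)`,
`θ ∈ [0, π]`, `φ ∈ [0, 2π)`. -/
def inSstar (ε b θ φ : ℝ) : Prop :=
  (φ ∈ Set.Icc 0 b ∪ Set.Icc (π - b) π ∪ Set.Icc π (π + b) ∪ Set.Icc (2 * π - b) (2 * π)) ∧
    θ ∈ Set.Icc (Real.arccos ε) (π - Real.arccos ε)

open Classical in
/-- The density `ρ = (8bε)⁻¹` on `S*` and `0` elsewhere, as a function of `(θ, φ)`. -/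
noncomputable def rho (ε b θ φ : ℝ) : ℝ :=
  if inSstar ε b θ φ then 1 / (8 * b * ε) else 0

/-! The density is a constant times the product of the indicator of a band in `θ` and the
indicator of four sectors in `φ`, so every moment of a separable integrand `H(θ) G(φ)` is the
product of a `θ`-integral over `[arccos ε, π - arccos ε]` and the sum of the four sector
integrals of `G`. With `a = arccos ε` the `θ`-integrals are elementary in `cos a = ε`, and the
sector integrals of `sin²` and `cos²` are `2b ∓ sin 2b`. The mixed moments vanish because the band
is symmetric about `θ = π/2`, where `cos θ` changes sign, and because the sector integrals of
`sin φ cos φ` cancel in pairs. -/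

open MeasureTheory Set intervalIntegral

theorem IntervalIntegrable.indicator {f : ℝ → ℝ} {l u : ℝ} (hf : IntervalIntegrable f volume l u)
    {s : Set ℝ} (hs : MeasurableSet s) : IntervalIntegrable (s.indicator f) volume l u :=
  ⟨hf.1.indicator hs, hf.2.indicator hs⟩

section IndicatorIntegral

variable {f : ℝ → ℝ} {s : Set ℝ} {l u : ℝ}

theorem intervalIntegral_indicator_of_Ioo_subset (hlu : l ≤ u) (hs : Ioo l u ⊆ s) :
    ∫ x in l..u, s.indicator f x = ∫ x in l..u, f x := by
  simp only [integral_of_le hlu, integral_Ioc_eq_integral_Ioo]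
  exact setIntegral_congr_fun measurableSet_Ioo fun x hx => indicator_of_mem (hs hx) f

theorem intervalIntegral_indicator_of_disjoint (hlu : l ≤ u) (hs : Disjoint (Ioo l u) s) :
    ∫ x in l..u, s.indicator f x = 0 := by
  rw [integral_of_le hlu, integral_Ioc_eq_integral_Ioo]
  exact setIntegral_eq_zero_of_forall_eq_zero fun x hx =>
    indicator_of_notMem (hs.notMem_of_mem_left hx) f

theorem intervalIntegral_indicator_Icc (hf : Continuous f) {a b c d : ℝ} (hab : a ≤ b)
    (hbc : b ≤ c) (hcd : c ≤ d) :
    ∫ x in a..d, (Icc b c).indicator f x = ∫ x in b..c, f x := by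
  have hint (l u : ℝ) : IntervalIntegrable ((Icc b c).indicator f) volume l u :=
    (hf.intervalIntegrable l u).indicator measurableSet_Icc
  rw [← integral_add_adjacent_intervals (hint a b) (hint b d),
    ← integral_add_adjacent_intervals (hint b c) (hint c d),
    intervalIntegral_indicator_of_disjoint hab
      (disjoint_left.2 fun x hx hx' => hx.2.not_ge hx'.1),
    intervalIntegral_indicator_of_Ioo_subset hbc Ioo_subset_Icc_self,
    intervalIntegral_indicator_of_disjoint hcd
      (disjoint_left.2 fun x hx hx' => hx.1.not_ge hx'.2)]
  ring

end IndicatorIntegral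

def thetaBand (ε : ℝ) : Set ℝ := Icc (arccos ε) (π - arccos ε)

def phiSectors (b : ℝ) : Set ℝ :=
  Icc 0 b ∪ Icc (π - b) π ∪ Icc π (π + b) ∪ Icc (2 * π - b) (2 * π)

noncomputable def sectorIntegral (b : ℝ) (G : ℝ → ℝ) : ℝ :=
  (∫ φ in 0..b, G φ) + (∫ φ in π - b..π, G φ) + (∫ φ in π..π + b, G φ) +
    ∫ φ in 2 * π - b..2 * π, G φ

theorem rho_eq_indicator_mul_indicator (ε b θ φ : ℝ) :
    rho ε b θ φ =
      1 / (8 * b * ε) * (thetaBand ε).indicator 1 θ * (phiSectors b).indicator 1 φ := by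
  by_cases hθ : θ ∈ thetaBand ε <;> by_cases hφ : φ ∈ phiSectors b <;>
    simp_all [rho, inSstar, thetaBand, phiSectors]

theorem integral_indicator_phiSectors {G : ℝ → ℝ} (hG : Continuous G) {b : ℝ} (hb0 : 0 ≤ b)
    (hb1 : b ≤ π / 2) :
    ∫ φ in 0..2 * π, (phiSectors b).indicator G φ = sectorIntegral b G := by
  have hπ := pi_pos
  have hint (l u : ℝ) : IntervalIntegrable ((phiSectors b).indicator G) volume l u :=
    (hG.intervalIntegrable l u).indicator <|
      ((measurableSet_Icc.union measurableSet_Icc).union measurableSet_Icc).union measurableSet_Icc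
  have hgap (x : ℝ) (hx : x ∈ phiSectors b) :
      x ∉ Ioo b (π - b) ∧ x ∉ Ioo (π + b) (2 * π - b) := by
    simp only [phiSectors, mem_union, mem_Icc] at hx
    constructor <;> rintro ⟨hl, hu⟩ <;>
      rcases hx with ((⟨h₁, h₂⟩ | ⟨h₁, h₂⟩) | ⟨h₁, h₂⟩) | ⟨h₁, h₂⟩ <;> linarith
  rw [← integral_add_adjacent_intervals (hint 0 b) (hint b _),
    ← integral_add_adjacent_intervals (hint b (π - b)) (hint _ _),
    ← integral_add_adjacent_intervals (hint (π - b) π) (hint _ _),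
    ← integral_add_adjacent_intervals (hint π (π + b)) (hint _ _),
    ← integral_add_adjacent_intervals (hint (π + b) (2 * π - b)) (hint _ _),
    intervalIntegral_indicator_of_Ioo_subset (s := phiSectors b) hb0
      fun x hx => Or.inl (Or.inl (Or.inl (Ioo_subset_Icc_self hx))),
    intervalIntegral_indicator_of_disjoint (by linarith)
      (disjoint_right.2 fun x hx => (hgap x hx).1),
    intervalIntegral_indicator_of_Ioo_subset (s := phiSectors b) (by linarith)
      fun x hx => Or.inl (Or.inl (Or.inr (Ioo_subset_Icc_self hx))),
    intervalIntegral_indicator_of_Ioo_subset (s := phiSectors b) (by linarith)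
      fun x hx => Or.inl (Or.inr (Ioo_subset_Icc_self hx)),
    intervalIntegral_indicator_of_disjoint (by linarith)
      (disjoint_right.2 fun x hx => (hgap x hx).2),
    intervalIntegral_indicator_of_Ioo_subset (s := phiSectors b) (by linarith)
      fun x hx => Or.inr (Ioo_subset_Icc_self hx)]
  simp only [sectorIntegral]
  ring

theorem integral_integral_mul_rho {ε b : ℝ} (hε0 : 0 ≤ ε) (hb0 : 0 ≤ b) (hb1 : b ≤ π / 2)
    {F : ℝ → ℝ → ℝ} {H G : ℝ → ℝ} (hF : ∀ θ φ, F θ φ = H θ * G φ) (hH : Continuous H)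
    (hG : Continuous G) :
    ∫ θ in 0..π, ∫ φ in 0..2 * π, F θ φ * rho ε b θ φ * sin θ =
      1 / (8 * b * ε) * (∫ θ in arccos ε..π - arccos ε, H θ * sin θ) * sectorIntegral b G := by
  have hinner (θ : ℝ) : ∫ φ in 0..2 * π, F θ φ * rho ε b θ φ * sin θ =
      (thetaBand ε).indicator (fun θ => H θ * sin θ) θ *
        (1 / (8 * b * ε) * sectorIntegral b G) := by
    rw [← integral_indicator_phiSectors hG hb0 hb1, ← intervalIntegral.integral_const_mul,
      ← intervalIntegral.integral_const_mul]
    refine integral_congr fun φ _ => ?_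
    rw [hF, rho_eq_indicator_mul_indicator]
    by_cases hθ : θ ∈ thetaBand ε <;> by_cases hφ : φ ∈ phiSectors b <;> simp [hθ, hφ]
    ring
  have ha₀ := arccos_nonneg ε
  have ha₁ : arccos ε ≤ π / 2 := arccos_le_pi_div_two.2 hε0
  simp only [hinner, intervalIntegral.integral_mul_const]
  rw [thetaBand, intervalIntegral_indicator_Icc (f := fun θ => H θ * sin θ) (by fun_prop) ha₀
    (by linarith) (by linarith)]
  ring

section ThetaIntegrals

variable (a : ℝ)

theorem integral_sin_pi_sub : ∫ x in a..π - a, sin x = 2 * cos a := by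
  rw [integral_sin, cos_pi_sub]
  ring

theorem integral_cos_sq_mul_sin_pi_sub :
    ∫ x in a..π - a, cos x ^ 2 * sin x = 2 * cos a ^ 3 / 3 := by
  simp only [mul_comm (cos _ ^ 2), integral_sin_mul_cos_sq, cos_pi_sub]
  ring

theorem integral_sin_sq_mul_sin_pi_sub :
    ∫ x in a..π - a, sin x ^ 2 * sin x = 2 * cos a - 2 * cos a ^ 3 / 3 := by
  simp only [← pow_succ, integral_sin_pow_three, cos_pi_sub]
  ring

theorem integral_cos_mul_sin_mul_sin_pi_sub : ∫ x in a..π - a, cos x * sin x * sin x = 0 := by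
  simp_rw [show ∀ x, cos x * sin x * sin x = sin x ^ 2 * cos x from fun x => by ring]
  rw [integral_sin_sq_mul_cos, sin_pi_sub, sub_self, zero_div]

end ThetaIntegrals

section SectorIntegrals

variable (b : ℝ)

theorem sectorIntegral_one : sectorIntegral b (fun _ => 1) = 4 * b := by
  simp only [sectorIntegral, intervalIntegral.integral_const, smul_eq_mul, mul_one]
  ring

theorem sectorIntegral_sin_sq : sectorIntegral b (fun φ => sin φ ^ 2) = 2 * b - sin (2 * b) := by
  simp only [sectorIntegral, integral_sin_sq, sin_add, cos_add, sin_sub, cos_sub, sin_pi,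
    cos_pi, cos_two_pi, sin_zero, cos_zero, sin_two_mul]
  ring

theorem sectorIntegral_cos_sq : sectorIntegral b (fun φ => cos φ ^ 2) = 2 * b + sin (2 * b) := by
  simp only [sectorIntegral, integral_cos_sq, sin_add, cos_add, sin_sub, cos_sub, sin_pi,
    cos_pi, cos_two_pi, sin_zero, cos_zero, sin_two_mul]
  ring

theorem sectorIntegral_sin_mul_cos : sectorIntegral b (fun φ => sin φ * cos φ) = 0 := by
  simp only [sectorIntegral, integral_sin_mul_cos₁, sin_add, sin_sub, sin_pi, cos_pi,
    sin_two_pi, cos_two_pi, sin_zero]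
  ring

end SectorIntegrals

theorem moments_of_rho (ε b : ℝ) (hε0 : 0 < ε) (hε1 : ε ≤ 1) (hb0 : 0 < b)
    (hb1 : b ≤ π / 2) :
    (∫ θ in (0:ℝ)..π, ∫ φ in (0:ℝ)..(2 * π),
        rho ε b θ φ * Real.sin θ) = 1 ∧
    (∫ θ in (0:ℝ)..π, ∫ φ in (0:ℝ)..(2 * π),
        (Real.cos θ) ^ 2 * rho ε b θ φ * Real.sin θ) = ε ^ 2 / 3 ∧
    (∫ θ in (0:ℝ)..π, ∫ φ in (0:ℝ)..(2 * π),
        (Real.sin θ * Real.sin φ) ^ 2 * rho ε b θ φ * Real.sin θ)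
      = (1 / 2 - Real.sin (2 * b) / (4 * b)) * (1 - ε ^ 2 / 3) ∧
    (∫ θ in (0:ℝ)..π, ∫ φ in (0:ℝ)..(2 * π),
        (Real.sin θ * Real.cos φ) ^ 2 * rho ε b θ φ * Real.sin θ)
      = (1 / 2 + Real.sin (2 * b) / (4 * b)) * (1 - ε ^ 2 / 3) ∧
    (∫ θ in (0:ℝ)..π, ∫ φ in (0:ℝ)..(2 * π),
        (Real.cos θ) * (Real.sin θ * Real.sin φ) * rho ε b θ φ * Real.sin θ) = 0 ∧
    (∫ θ in (0:ℝ)..π, ∫ φ in (0:ℝ)..(2 * π),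
        (Real.sin θ * Real.sin φ) * (Real.sin θ * Real.cos φ) * rho ε b θ φ * Real.sin θ) = 0 ∧
    (∫ θ in (0:ℝ)..π, ∫ φ in (0:ℝ)..(2 * π),
        (Real.sin θ * Real.cos φ) * (Real.cos θ) * rho ε b θ φ * Real.sin θ) = 0 := by
  have hcos : cos (arccos ε) = ε := cos_arccos (by linarith) hε1
  have moment := @integral_integral_mul_rho ε b hε0.le hb0.le hb1
  refine ⟨?_, ?_, ?_, ?_, ?_, ?_, ?_⟩
  · have h := moment (F := fun _ _ => 1) (H := fun _ => 1) (G := fun _ => 1) (fun _ _ => by ring)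
      continuous_const continuous_const
    simp only [one_mul] at h
    rw [h, integral_sin_pi_sub, sectorIntegral_one, hcos]
    field_simp
    norm_num
  · rw [moment (H := fun θ => cos θ ^ 2) (G := fun _ => 1) (fun _ _ => by ring) (by fun_prop)
      continuous_const, integral_cos_sq_mul_sin_pi_sub, sectorIntegral_one, hcos]
    field_simp
    ring
  · rw [moment (H := fun θ => sin θ ^ 2) (G := fun φ => sin φ ^ 2) (fun _ _ => by ring)
      (by fun_prop) (by fun_prop), integral_sin_sq_mul_sin_pi_sub, sectorIntegral_sin_sq, hcos]
    field_simp
    ring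
  · rw [moment (H := fun θ => sin θ ^ 2) (G := fun φ => cos φ ^ 2) (fun _ _ => by ring)
      (by fun_prop) (by fun_prop), integral_sin_sq_mul_sin_pi_sub, sectorIntegral_cos_sq, hcos]
    field_simp
    ring
  · rw [moment (H := fun θ => cos θ * sin θ) (G := sin) (fun _ _ => by ring) (by fun_prop)
      continuous_sin, integral_cos_mul_sin_mul_sin_pi_sub, mul_zero, zero_mul]
  · rw [moment (H := fun θ => sin θ ^ 2) (G := fun φ => sin φ * cos φ) (fun _ _ => by ring)
      (by fun_prop) (by fun_prop), sectorIntegral_sin_mul_cos, mul_zero]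
  · rw [moment (H := fun θ => cos θ * sin θ) (G := cos) (fun _ _ => by ring) (by fun_prop)
      continuous_cos, integral_cos_mul_sin_mul_sin_pi_sub, mul_zero, zero_mul]
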